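/- arXiv:2509.16508 — 2 statements merged into one kernel-verified Lean document; each statement's English description precedes it below -/
import Mathlib

section
/- Let m ≥ 1, and for each i = 1, …, m let β_i ∈ (0, 1), γ_i > 0, B_i > 0, α > 0, C_i^(0) ≥ 0, and nonnegative reals d_i^(t) ≤ α B_i, with the recursion C_i^(t+1) = (1 − β_i) C_i^(t) + β_i γ_i d_i^(t). Write the per-iteration average \overline{(C^(t))²} = (1/m) ∑_{i=1}^m (C_i^(t))². Then for every T ≥ 0, ∑_{t=0}^T \overline{(C^(t))²} ≤ ((1/m) ∑_{i=1}^m (C_i^(0))²) / (1 − (1 − min_i β_i)²) + (2 max_i(γ_i B_i) α (1/m) ∑_{i=1}^m C_i^(0)) / (min_i β_i) + (max_i(γ_i B_i))² α² (T + 1). -/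
open scoped BigOperators

lemma geom_aux {r : ℝ} (h0 : 0 ≤ r) (h1 : r < 1) (n : ℕ) :
    ∑ t ∈ Finset.range n, r ^ t ≤ 1 / (1 - r) := by
  have h2 : (0:ℝ) < 1 - r := by linarith
  have heq : ∑ t ∈ Finset.range n, r ^ t = (1 - r ^ n) / (1 - r) := by
    rw [geom_sum_eq h1.ne]
    rw [div_eq_div_iff (by linarith) (by linarith)]
    ring
  rw [heq]
  gcongr
  have := pow_nonneg h0 n
  linarith

/-- **Cumulative average squared clipping threshold bound (Lemma 8(iii)).** For `m ≥ 1`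
clients with recursions `C i (t+1) = (1 - β i) * C i t + β i * γ i * d i t`,
`β i ∈ (0,1)`, `γ i, B i > 0`, `α > 0`, `C i 0 ≥ 0`, and `0 ≤ d i t ≤ α * B i`, the sum
over `t = 0, …, T` of the per-iteration averages `(1/m) ∑ i (C i t)²` is bounded by
`((1/m) ∑ i (C i 0)²) / (1 - (1 - min_i β i)²)
  + 2 (max_i γ i B i) α ((1/m) ∑ i C i 0) / (min_i β i)
  + (max_i γ i B i)² α² (T + 1)`. -/
theorem cumulative_avg_sq_clipping_bound
    {m : ℕ} (hm : 0 < m)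
    (β γ B : Fin m → ℝ) (α : ℝ)
    (hβ : ∀ i, 0 < β i) (hβ1 : ∀ i, β i < 1)
    (hγ : ∀ i, 0 < γ i) (hB : ∀ i, 0 < B i) (hα : 0 < α)
    (C0 : Fin m → ℝ) (hC0 : ∀ i, 0 ≤ C0 i)
    (d : Fin m → ℕ → ℝ) (hd0 : ∀ i t, 0 ≤ d i t) (hd : ∀ i t, d i t ≤ α * B i)
    (C : Fin m → ℕ → ℝ) (hCinit : ∀ i, C i 0 = C0 i)
    (hrec : ∀ i t, C i (t + 1) = (1 - β i) * C i t + β i * γ i * d i t)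
    (T : ℕ) :
    ∑ t ∈ Finset.range (T + 1), (m : ℝ)⁻¹ * ∑ i, (C i t) ^ 2 ≤
      ((m : ℝ)⁻¹ * ∑ i, (C0 i) ^ 2) / (1 - (1 - ⨅ i, β i) ^ 2)
        + 2 * (⨆ i, γ i * B i) * α * ((m : ℝ)⁻¹ * ∑ i, C0 i) / (⨅ i, β i)
        + (⨆ i, γ i * B i) ^ 2 * α ^ 2 * (T + 1) := by
  have hne : Nonempty (Fin m) := ⟨⟨0, hm⟩⟩
  obtain ⟨j, -, hj⟩ := Finset.exists_min_image Finset.univ β ⟨⟨0, hm⟩, Finset.mem_univ _⟩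
  have hβeq : (⨅ i, β i) = β j :=
    le_antisymm (ciInf_le (Set.finite_range β).bddBelow j)
      (le_ciInf fun i => hj i (Finset.mem_univ i))
  obtain ⟨k, -, hk⟩ := Finset.exists_max_image Finset.univ (fun i => γ i * B i)
    ⟨⟨0, hm⟩, Finset.mem_univ _⟩
  have hGeq : (⨆ i, γ i * B i) = γ k * B k :=
    le_antisymm (ciSup_le fun i => hk i (Finset.mem_univ i))
      (le_ciSup (α := ℝ) (f := fun i => γ i * B i) (Set.finite_range _).bddAbove k)
  set b := β j with hbdef
  set G := γ k * B k with hGdef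
  have hb0 : 0 < b := hβ j
  have hb1 : b < 1 := hβ1 j
  have hG0 : 0 < G := mul_pos (hγ k) (hB k)
  have hq0 : (0:ℝ) ≤ 1 - b := by linarith
  have hq1 : (1 - b) < 1 := by linarith
  have hden : 0 < 1 - (1 - b) ^ 2 := by nlinarith
  have hCpos : ∀ i t, 0 ≤ C i t := by
    intro i t
    induction t with
    | zero => rw [hCinit]; exact hC0 i
    | succ t ih =>
      rw [hrec]
      have h1 : 0 ≤ 1 - β i := by linarith [hβ1 i]
      have h2 := mul_nonneg h1 ih
      have h3 := mul_nonneg (mul_nonneg (hβ i).le (hγ i).le) (hd0 i t)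
      linarith
  have hbound : ∀ i t, C i t ≤ (1 - b) ^ t * C0 i + G * α := by
    intro i t
    induction t with
    | zero =>
      rw [hCinit]
      have := mul_nonneg hG0.le hα.le
      simp only [pow_zero, one_mul]
      linarith
    | succ t ih =>
      rw [hrec]
      have hβi1 : (1 - β i) ≤ (1 - b) := by linarith [hj i (Finset.mem_univ i)]
      have hβi0 : 0 ≤ 1 - β i := by linarith [hβ1 i]
      have hdt : β i * γ i * d i t ≤ β i * (G * α) := by
        have h1 : γ i * d i t ≤ G * α := by
          calc γ i * d i t ≤ γ i * (α * B i) :=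
                mul_le_mul_of_nonneg_left (hd i t) (hγ i).le
            _ = (γ i * B i) * α := by ring
            _ ≤ G * α := mul_le_mul_of_nonneg_right (hk i (Finset.mem_univ i)) hα.le
        calc β i * γ i * d i t = β i * (γ i * d i t) := by ring
          _ ≤ β i * (G * α) := mul_le_mul_of_nonneg_left h1 (hβ i).le
      have hp : 0 ≤ (1 - b) ^ t := pow_nonneg hq0 t
      have h2 : (1 - β i) * C i t ≤ (1 - β i) * ((1 - b) ^ t * C0 i + G * α) :=
        mul_le_mul_of_nonneg_left ih hβi0
      have h3 : (1 - β i) * ((1 - b) ^ t * C0 i) ≤ (1 - b) * ((1 - b) ^ t * C0 i) :=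
        mul_le_mul_of_nonneg_right hβi1 (mul_nonneg hp (hC0 i))
      have h2' : (1 - β i) * C i t ≤ (1 - β i) * ((1 - b) ^ t * C0 i) + (1 - β i) * (G * α) := by
        rw [← mul_add]; exact h2
      have h4' : (1 - b) ^ (t + 1) * C0 i = (1 - b) * ((1 - b) ^ t * C0 i) := by ring
      have h5 : (1 - β i) * (G * α) = G * α - β i * (G * α) := by ring
      linarith
  have hsq : ∀ i t, (C i t) ^ 2 ≤
      ((1 - b) ^ 2) ^ t * (C0 i) ^ 2 + 2 * G * α * ((1 - b) ^ t * C0 i) + G ^ 2 * α ^ 2 := by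
    intro i t
    have h1 := hbound i t
    have h2 := hCpos i t
    have hp : 0 ≤ (1 - b) ^ t := pow_nonneg hq0 t
    have h3 : (C i t) ^ 2 ≤ ((1 - b) ^ t * C0 i + G * α) ^ 2 := by
      nlinarith [mul_nonneg hp (hC0 i), mul_nonneg hG0.le hα.le]
    calc (C i t) ^ 2 ≤ ((1 - b) ^ t * C0 i + G * α) ^ 2 := h3
      _ = ((1 - b) ^ 2) ^ t * (C0 i) ^ 2 + 2 * G * α * ((1 - b) ^ t * C0 i) + G ^ 2 * α ^ 2 := by
          rw [← pow_mul, mul_comm 2 t, pow_mul]; ring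
  have hsum : ∀ i, ∑ t ∈ Finset.range (T + 1), (C i t) ^ 2 ≤
      (1 / (1 - (1 - b) ^ 2)) * (C0 i) ^ 2 + (2 * G * α * (1 / b)) * C0 i
        + G ^ 2 * α ^ 2 * (T + 1) := by
    intro i
    have step1 : ∑ t ∈ Finset.range (T + 1), (C i t) ^ 2 ≤
        (C0 i) ^ 2 * ∑ t ∈ Finset.range (T + 1), ((1 - b) ^ 2) ^ t
          + 2 * G * α * C0 i * ∑ t ∈ Finset.range (T + 1), (1 - b) ^ t
          + G ^ 2 * α ^ 2 * (T + 1) := by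
      calc ∑ t ∈ Finset.range (T + 1), (C i t) ^ 2
          ≤ ∑ t ∈ Finset.range (T + 1),
              (((1 - b) ^ 2) ^ t * (C0 i) ^ 2 + 2 * G * α * ((1 - b) ^ t * C0 i)
                + G ^ 2 * α ^ 2) :=
            Finset.sum_le_sum fun t _ => hsq i t
        _ = (C0 i) ^ 2 * ∑ t ∈ Finset.range (T + 1), ((1 - b) ^ 2) ^ t
              + 2 * G * α * C0 i * ∑ t ∈ Finset.range (T + 1), (1 - b) ^ t
              + G ^ 2 * α ^ 2 * (T + 1) := by
            rw [Finset.sum_add_distrib, Finset.sum_add_distrib, Finset.sum_const,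
              Finset.card_range, nsmul_eq_mul, Finset.mul_sum, Finset.mul_sum]
            congr 1
            · congr 1
              · exact Finset.sum_congr rfl fun t _ => by ring
              · exact Finset.sum_congr rfl fun t _ => by ring
            · push_cast; ring
    have hgeo1 := geom_aux (by positivity) (by nlinarith) (T + 1) (r := (1 - b) ^ 2)
    have hgeo2 : ∑ t ∈ Finset.range (T + 1), (1 - b) ^ t ≤ 1 / b := by
      have := geom_aux hq0 hq1 (T + 1)
      simpa using this
    calc ∑ t ∈ Finset.range (T + 1), (C i t) ^ 2
        ≤ (C0 i) ^ 2 * ∑ t ∈ Finset.range (T + 1), ((1 - b) ^ 2) ^ t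
            + 2 * G * α * C0 i * ∑ t ∈ Finset.range (T + 1), (1 - b) ^ t
            + G ^ 2 * α ^ 2 * (T + 1) := step1
      _ ≤ (C0 i) ^ 2 * (1 / (1 - (1 - b) ^ 2)) + 2 * G * α * C0 i * (1 / b)
            + G ^ 2 * α ^ 2 * (T + 1) := by
          gcongr <;>
            first
              | exact hgeo1
              | exact hgeo2
              | positivity
              | exact mul_nonneg (by positivity) (hC0 i)
      _ = (1 / (1 - (1 - b) ^ 2)) * (C0 i) ^ 2 + (2 * G * α * (1 / b)) * C0 i
            + G ^ 2 * α ^ 2 * (T + 1) := by ring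
  rw [hβeq, hGeq]
  calc ∑ t ∈ Finset.range (T + 1), (m : ℝ)⁻¹ * ∑ i, (C i t) ^ 2
      = (m : ℝ)⁻¹ * ∑ i, ∑ t ∈ Finset.range (T + 1), (C i t) ^ 2 := by
        rw [← Finset.mul_sum, Finset.sum_comm]
    _ ≤ (m : ℝ)⁻¹ * ∑ i, ((1 / (1 - (1 - b) ^ 2)) * (C0 i) ^ 2 + (2 * G * α * (1 / b)) * C0 i
          + G ^ 2 * α ^ 2 * (T + 1)) := by
        apply mul_le_mul_of_nonneg_left (Finset.sum_le_sum fun i _ => hsum i) (by positivity)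
    _ = ((m : ℝ)⁻¹ * ∑ i, (C0 i) ^ 2) / (1 - (1 - b) ^ 2)
          + 2 * G * α * ((m : ℝ)⁻¹ * ∑ i, C0 i) / b
          + G ^ 2 * α ^ 2 * (T + 1) := by
        rw [Finset.sum_add_distrib, Finset.sum_add_distrib, ← Finset.mul_sum, ← Finset.mul_sum,
          Finset.sum_const, Finset.card_univ, Fintype.card_fin, nsmul_eq_mul]
        have hm0 : (m : ℝ) ≠ 0 := by positivity
        field_simp
end

section
/- For each i = 1, …, m, let g_i be a random vector in ℝ^d, α_i > 0 and C_i > 0 constants, Δ_i = −α_i g_i, and let ε_i be random vectors satisfying E[ε_i | g_1, …, g_m] = 0 and E[‖ε_i‖² | g_1, …, g_m] = σ_{0,i}² + σ_{1,i}² ‖Δ_i‖². Then E‖ (1/m) ∑_{i=1}^m ( min(1, C_i/‖Δ_i‖) Δ_i + ε_i ) ‖² ≤ (1/m) ∑_{i=1}^m ( C_i² + σ_{0,i}² ) + (1/m) ∑_{i=1}^m α_i² (1 + σ_{1,i}²) E‖g_i‖². -/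
open MeasureTheory
open scoped BigOperators

private theorem coord_abs_le_norm_aux {d : ℕ} (x : EuclideanSpace ℝ (Fin d)) (k : Fin d) :
    |x k| ≤ ‖x‖ := by
  rw [EuclideanSpace.norm_eq]
  refine (Real.le_sqrt (abs_nonneg _) (by positivity)).mpr ?_
  calc |x k| ^ 2 = ‖x k‖ ^ 2 := by rw [Real.norm_eq_abs]
    _ ≤ ∑ j, ‖x j‖ ^ 2 :=
      Finset.single_le_sum (f := fun j => ‖x j‖ ^ 2) (fun j _ => by positivity) (Finset.mem_univ k)

/-- The σ-algebra generated by the family of gradients. -/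
private def gradSigma {d m : ℕ} {Ω : Type*} [MeasurableSpace Ω]
    (g : Fin m → Ω → EuclideanSpace ℝ (Fin d)) : MeasurableSpace Ω :=
  MeasurableSpace.comap (fun ω => (fun j => g j ω)) inferInstance

/-- **Second moment of the averaged clipped-and-noised update.** For random gradients `g i`,
local steps `Δ i = -α i • g i`, clipping thresholds `C i > 0`, and privacy noises `ε i`
with zero conditional mean and conditional second moment `σ0sq i + σ1sq i * ‖Δ i‖²`
given the gradients, the expected squared norm of the averaged clipped update plus noise
is at most `(1/m) ∑ i (C i² + σ0sq i) + (1/m) ∑ i α i² (1 + σ1sq i) E‖g i‖²`. -/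
theorem second_moment_clipped_update
    {d m : ℕ} (hm : 0 < m)
    {Ω : Type*} [MeasurableSpace Ω] (μ : Measure Ω) [IsProbabilityMeasure μ]
    (g ε : Fin m → Ω → EuclideanSpace ℝ (Fin d))
    (α C σ0sq σ1sq : Fin m → ℝ)
    (hα : ∀ i, 0 < α i) (hC : ∀ i, 0 < C i)
    -- the local stochastic gradient step
    (Δ : Fin m → Ω → EuclideanSpace ℝ (Fin d))
    (hΔ : ∀ i ω, Δ i ω = -(α i • g i ω))
    -- measurability and integrability
    (hgmeas : Measurable fun ω => (fun i => g i ω))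
    (hεmeas : ∀ i, AEStronglyMeasurable (ε i) μ)
    (hgsqint : ∀ i, Integrable (fun ω => ‖g i ω‖ ^ 2) μ)
    (hεint : ∀ i, Integrable (ε i) μ)
    (hεsqint : ∀ i, Integrable (fun ω => ‖ε i ω‖ ^ 2) μ)
    -- conditional mean zero and conditional second moment of the noise, given the gradients
    (hε0 : ∀ i,
      μ[ε i | MeasurableSpace.comap (fun ω => (fun j => g j ω)) inferInstance] =ᵐ[μ] 0)
    (hεsq : ∀ i,
      μ[(fun ω => ‖ε i ω‖ ^ 2) |
          MeasurableSpace.comap (fun ω => (fun j => g j ω)) inferInstance] =ᵐ[μ]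
        (fun ω => σ0sq i + σ1sq i * ‖Δ i ω‖ ^ 2)) :
    ∫ ω, ‖(m : ℝ)⁻¹ • ∑ i, (min 1 (C i / ‖Δ i ω‖) • Δ i ω + ε i ω)‖ ^ 2 ∂μ ≤
      (m : ℝ)⁻¹ * ∑ i, (C i ^ 2 + σ0sq i) +
        (m : ℝ)⁻¹ * ∑ i, α i ^ 2 * (1 + σ1sq i) * ∫ ω, ‖g i ω‖ ^ 2 ∂μ := by
  classical
  have hε0' : ∀ i, μ[ε i | gradSigma g] =ᵐ[μ] 0 := hε0
  have hεsq' : ∀ i, μ[(fun ω => ‖ε i ω‖ ^ 2) | gradSigma g] =ᵐ[μ]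
      (fun ω => σ0sq i + σ1sq i * ‖Δ i ω‖ ^ 2) := hεsq
  clear hε0 hεsq
  have h𝔪 : gradSigma g ≤ ‹MeasurableSpace Ω› := measurable_iff_comap_le.mp hgmeas
  haveI : SigmaFinite (μ.trim h𝔪) := inferInstance
  set a : Fin m → Ω → EuclideanSpace ℝ (Fin d) :=
    fun i ω => min 1 (C i / ‖Δ i ω‖) • Δ i ω with ha
  -- measurability facts
  have hGm : Measurable[gradSigma g] (fun ω => (fun j => g j ω)) := comap_measurable _
  have hgim : ∀ i, Measurable[gradSigma g] (g i) := fun i =>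
    (measurable_pi_apply i).comp hGm
  have hΔm : ∀ i, StronglyMeasurable[gradSigma g] (Δ i) := by
    intro i
    rw [show Δ i = fun ω => -(α i • g i ω) from funext (hΔ i)]
    refine StronglyMeasurable.neg ?_
    refine StronglyMeasurable.const_smul ?_ (α i)
    refine Measurable.stronglyMeasurable ?_
    exact hgim i
  have ham : ∀ i, StronglyMeasurable[gradSigma g] (a i) := by
    intro i
    have hnm : Measurable[gradSigma g] (fun ω => ‖Δ i ω‖) := by
      have h : StronglyMeasurable[gradSigma g] (fun ω => ‖Δ i ω‖) := (hΔm i).norm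
      exact h.measurable
    have hs : StronglyMeasurable[gradSigma g] (fun ω => min 1 (C i / ‖Δ i ω‖)) := by
      refine Measurable.stronglyMeasurable ?_
      exact Measurable.min measurable_const (measurable_const.div hnm)
    exact hs.smul (hΔm i)
  have ham0 : ∀ i, AEStronglyMeasurable (a i) μ := fun i =>
    ((ham i).mono h𝔪).aestronglyMeasurable
  have hakm : ∀ i k, StronglyMeasurable[gradSigma g] (fun ω => a i ω k) := fun i k =>
    ((EuclideanSpace.proj (𝕜 := ℝ) k).continuous.comp_stronglyMeasurable (ham i))
  -- the clipped update is bounded by C i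
  have hab : ∀ i ω, ‖a i ω‖ ≤ C i := by
    intro i ω
    rw [ha]
    rcases eq_or_lt_of_le (norm_nonneg (Δ i ω)) with h | h
    · rw [norm_smul, ← h, mul_zero]; exact (hC i).le
    · have hmin0 : 0 ≤ min 1 (C i / ‖Δ i ω‖) :=
        le_min zero_le_one (div_nonneg (hC i).le (norm_nonneg _))
      rw [norm_smul, Real.norm_eq_abs, abs_of_nonneg hmin0]
      calc min 1 (C i / ‖Δ i ω‖) * ‖Δ i ω‖ ≤ (C i / ‖Δ i ω‖) * ‖Δ i ω‖ :=
            mul_le_mul_of_nonneg_right (min_le_right _ _) (norm_nonneg _)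
        _ = C i := div_mul_cancel₀ _ (ne_of_gt h)
  -- coordinates of the noise are integrable
  have hεkint : ∀ i k, Integrable (fun ω => ε i ω k) μ := fun i k =>
    (EuclideanSpace.proj (𝕜 := ℝ) k).integrable_comp (hεint i)
  -- conditional expectation of each noise coordinate vanishes
  have hεk0 : ∀ i k, μ[(fun ω => ε i ω k) | gradSigma g] =ᵐ[μ] 0 := by
    intro i k
    have h0 : (0 : Ω → ℝ) =ᵐ[μ] μ[(fun ω => ε i ω k) | gradSigma g] := by
      refine ae_eq_condExp_of_forall_setIntegral_eq h𝔪 (hεkint i k)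
        (fun s _ _ => (integrable_zero _ _ _).integrableOn) (fun s hs hμs => ?_) ?_
      · have h1 : ∫ ω in s, ε i ω k ∂μ =
            (EuclideanSpace.proj (𝕜 := ℝ) k) (∫ ω in s, ε i ω ∂μ) :=
          ((EuclideanSpace.proj (𝕜 := ℝ) k).integral_comp_comm ((hεint i).restrict))
        have h2 : ∫ ω in s, ε i ω ∂μ = 0 := by
          rw [← setIntegral_condExp h𝔪 (hεint i) hs]
          exact integral_eq_zero_of_ae (ae_restrict_of_ae (hε0' i))
        simp [h1, h2]
      · exact StronglyMeasurable.aestronglyMeasurable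
          (stronglyMeasurable_const : StronglyMeasurable[gradSigma g] (fun _ : Ω => (0 : ℝ)))
    exact h0.symm
  -- the cross term vanishes
  have hcross : ∀ i, ∫ ω, (inner ℝ (a i ω) (ε i ω) : ℝ) ∂μ = 0 := by
    intro i
    have hinner : ∀ ω, (inner ℝ (a i ω) (ε i ω) : ℝ) = ∑ k, a i ω k * ε i ω k := fun ω => by
      simp [PiLp.inner_apply, RCLike.inner_apply, mul_comm]
    have hterm_int : ∀ k : Fin d, Integrable (fun ω => a i ω k * ε i ω k) μ := by
      intro k
      have hsm : AEStronglyMeasurable (fun ω => a i ω k * ε i ω k) μ := by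
        have h := (((hakm i k).mono h𝔪).aestronglyMeasurable).mul (hεkint i k).1
        exact h
      refine ((hεkint i k).norm.const_mul (C i)).mono' hsm ?_
      refine ae_of_all _ fun ω => ?_
      rw [Real.norm_eq_abs, abs_mul]
      have h1 : |a i ω k| ≤ C i := (coord_abs_le_norm_aux _ k).trans (hab i ω)
      calc |a i ω k| * |ε i ω k| ≤ C i * |ε i ω k| :=
            mul_le_mul_of_nonneg_right h1 (abs_nonneg _)
        _ = C i * ‖ε i ω k‖ := by rw [Real.norm_eq_abs]
    calc ∫ ω, (inner ℝ (a i ω) (ε i ω) : ℝ) ∂μ = ∫ ω, ∑ k, a i ω k * ε i ω k ∂μ := by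
          simp_rw [hinner]
      _ = ∑ k, ∫ ω, a i ω k * ε i ω k ∂μ := integral_finset_sum _ fun k _ => hterm_int k
      _ = 0 := by
          refine Finset.sum_eq_zero fun k _ => ?_
          have hmul := condExp_stronglyMeasurable_mul_of_bound h𝔪 (hakm i k) (hεkint i k)
            (C i) (ae_of_all _ fun ω => by
              rw [Real.norm_eq_abs]
              exact (coord_abs_le_norm_aux _ k).trans (hab i ω))
          calc ∫ ω, a i ω k * ε i ω k ∂μ
              = ∫ ω, (μ[(fun ω => a i ω k) * (fun ω => ε i ω k) | gradSigma g]) ω ∂μ :=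
                (integral_condExp h𝔪).symm
            _ = ∫ ω, a i ω k * (μ[(fun ω => ε i ω k) | gradSigma g]) ω ∂μ :=
                integral_congr_ae hmul
            _ = 0 := by
                have hz : (fun ω => a i ω k * (μ[(fun ω => ε i ω k) | gradSigma g]) ω) =ᵐ[μ]
                    (fun _ => (0:ℝ)) := (hεk0 i k).mono fun ω h => by simp [h]
                rw [integral_congr_ae hz, integral_zero]
  -- the second moment of the noise
  have hΔnorm : ∀ i ω, ‖Δ i ω‖ ^ 2 = α i ^ 2 * ‖g i ω‖ ^ 2 := fun i ω => by
    rw [hΔ i ω, norm_neg, norm_smul, Real.norm_eq_abs, abs_of_pos (hα i), mul_pow]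
  have hnoise : ∀ i, ∫ ω, ‖ε i ω‖ ^ 2 ∂μ =
      σ0sq i + σ1sq i * (α i ^ 2 * ∫ ω, ‖g i ω‖ ^ 2 ∂μ) := by
    intro i
    have h1 : ∫ ω, ‖ε i ω‖ ^ 2 ∂μ = ∫ ω, (σ0sq i + σ1sq i * ‖Δ i ω‖ ^ 2) ∂μ := by
      rw [← integral_condExp h𝔪 (f := fun ω => ‖ε i ω‖ ^ 2)]
      exact integral_congr_ae (hεsq' i)
    have h2 : ∀ ω, σ0sq i + σ1sq i * ‖Δ i ω‖ ^ 2
        = σ0sq i + σ1sq i * α i ^ 2 * ‖g i ω‖ ^ 2 := fun ω => by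
      rw [hΔnorm i ω]; ring
    have e1 : ∫ ω, (σ0sq i + σ1sq i * α i ^ 2 * ‖g i ω‖ ^ 2) ∂μ
        = (∫ _ω, σ0sq i ∂μ) + ∫ ω, σ1sq i * α i ^ 2 * ‖g i ω‖ ^ 2 ∂μ :=
      integral_add (integrable_const _) ((hgsqint i).const_mul _)
    have e2 : ∫ ω, σ1sq i * α i ^ 2 * ‖g i ω‖ ^ 2 ∂μ
        = σ1sq i * α i ^ 2 * ∫ ω, ‖g i ω‖ ^ 2 ∂μ := by
      rw [← integral_const_mul]
    have e3 : (∫ _ω, σ0sq i ∂μ) = σ0sq i := by simp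
    rw [h1]
    simp_rw [h2]
    rw [e1, e2, e3]
    ring
  -- integrability of the summands
  have hx_sm : ∀ i, AEStronglyMeasurable (fun ω => a i ω + ε i ω) μ := by
    intro i
    have h := (ham0 i).add (hεmeas i)
    exact h
  have hxsq_int : ∀ i, Integrable (fun ω => ‖a i ω + ε i ω‖ ^ 2) μ := by
    intro i
    have hgi : Integrable (fun ω => 2 * C i ^ 2 + 2 * ‖ε i ω‖ ^ 2) μ := by
      have h := (integrable_const (2 * C i ^ 2 : ℝ)).add ((hεsqint i).const_mul 2)
      exact h
    refine hgi.mono' (((hx_sm i).norm.aemeasurable.pow_const 2).aestronglyMeasurable)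
      (ae_of_all _ fun ω => ?_)
    have h1 : ‖a i ω + ε i ω‖ ≤ C i + ‖ε i ω‖ :=
      (norm_add_le _ _).trans (add_le_add_left (hab i ω) _)
    rw [Real.norm_eq_abs, abs_of_nonneg (by positivity)]
    nlinarith [norm_nonneg (ε i ω), norm_nonneg (a i ω + ε i ω), hC i, sq_nonneg (C i - ‖ε i ω‖)]
  -- the per-client second moment bound
  have hper : ∀ i, ∫ ω, ‖a i ω + ε i ω‖ ^ 2 ∂μ ≤
      (C i ^ 2 + σ0sq i) + α i ^ 2 * (1 + σ1sq i) * ∫ ω, ‖g i ω‖ ^ 2 ∂μ := by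
    intro i
    have hasq_int : Integrable (fun ω => ‖a i ω‖ ^ 2) μ := by
      refine (integrable_const (C i ^ 2)).mono'
        (((ham0 i).norm.aemeasurable.pow_const 2).aestronglyMeasurable)
        (ae_of_all _ fun ω => ?_)
      rw [Real.norm_eq_abs, abs_of_nonneg (by positivity)]
      nlinarith [hab i ω, norm_nonneg (a i ω), hC i]
    have hinner_int : Integrable (fun ω => (inner ℝ (a i ω) (ε i ω) : ℝ)) μ := by
      have hsm : AEStronglyMeasurable (fun ω => (inner ℝ (a i ω) (ε i ω) : ℝ)) μ := by
        have h := AEStronglyMeasurable.inner (𝕜 := ℝ) (ham0 i) (hεmeas i)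
        exact h
      refine ((hεint i).norm.const_mul (C i)).mono' hsm (ae_of_all _ fun ω => ?_)
      rw [Real.norm_eq_abs]
      calc |(inner ℝ (a i ω) (ε i ω) : ℝ)| ≤ ‖a i ω‖ * ‖ε i ω‖ := abs_real_inner_le_norm _ _
        _ ≤ C i * ‖ε i ω‖ := mul_le_mul_of_nonneg_right (hab i ω) (norm_nonneg _)
    have h12 : Integrable (fun ω => ‖a i ω‖ ^ 2 + 2 * (inner ℝ (a i ω) (ε i ω) : ℝ)) μ := by
      have h := hasq_int.add (hinner_int.const_mul 2)
      exact h
    have hexp : ∀ ω, ‖a i ω + ε i ω‖ ^ 2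
        = ‖a i ω‖ ^ 2 + 2 * (inner ℝ (a i ω) (ε i ω) : ℝ) + ‖ε i ω‖ ^ 2 := fun ω =>
      norm_add_sq_real _ _
    have e1 : ∫ ω, (‖a i ω‖ ^ 2 + 2 * (inner ℝ (a i ω) (ε i ω) : ℝ) + ‖ε i ω‖ ^ 2) ∂μ
        = (∫ ω, (‖a i ω‖ ^ 2 + 2 * (inner ℝ (a i ω) (ε i ω) : ℝ)) ∂μ)
          + ∫ ω, ‖ε i ω‖ ^ 2 ∂μ := integral_add h12 (hεsqint i)
    have e2 : ∫ ω, (‖a i ω‖ ^ 2 + 2 * (inner ℝ (a i ω) (ε i ω) : ℝ)) ∂μ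
        = (∫ ω, ‖a i ω‖ ^ 2 ∂μ) + ∫ ω, 2 * (inner ℝ (a i ω) (ε i ω) : ℝ) ∂μ :=
      integral_add hasq_int (hinner_int.const_mul 2)
    have e3 : ∫ ω, 2 * (inner ℝ (a i ω) (ε i ω) : ℝ) ∂μ
        = 2 * ∫ ω, (inner ℝ (a i ω) (ε i ω) : ℝ) ∂μ := by rw [← integral_const_mul]
    have hsplit : ∫ ω, ‖a i ω + ε i ω‖ ^ 2 ∂μ
        = ∫ ω, ‖a i ω‖ ^ 2 ∂μ + 2 * ∫ ω, (inner ℝ (a i ω) (ε i ω) : ℝ) ∂μ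
          + ∫ ω, ‖ε i ω‖ ^ 2 ∂μ := by
      simp_rw [hexp]
      rw [e1, e2, e3]
    have hA : ∫ ω, ‖a i ω‖ ^ 2 ∂μ ≤ C i ^ 2 := by
      have h := integral_mono hasq_int (integrable_const (C i ^ 2))
        (fun ω => by nlinarith [hab i ω, norm_nonneg (a i ω)])
      simpa using h
    have hI : (0:ℝ) ≤ ∫ ω, ‖g i ω‖ ^ 2 ∂μ := integral_nonneg fun ω => by positivity
    rw [hsplit, hcross i, hnoise i]
    nlinarith [mul_nonneg (sq_nonneg (α i)) hI]
  -- pointwise bound on the average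
  have hm' : (0:ℝ) < m := by exact_mod_cast hm
  have hmain : ∀ ω, ‖(m : ℝ)⁻¹ • ∑ i, (a i ω + ε i ω)‖ ^ 2
      ≤ (m : ℝ)⁻¹ * ∑ i, ‖a i ω + ε i ω‖ ^ 2 := by
    intro ω
    have h1 : ‖∑ i, (a i ω + ε i ω)‖ ≤ ∑ i, ‖a i ω + ε i ω‖ := norm_sum_le _ _
    have h2 : (∑ i, ‖a i ω + ε i ω‖) ^ 2 ≤ (m : ℝ) * ∑ i, ‖a i ω + ε i ω‖ ^ 2 := by
      simpa using sq_sum_le_card_mul_sum_sq (s := (Finset.univ : Finset (Fin m)))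
        (f := fun i => ‖a i ω + ε i ω‖)
    have h3 : ‖∑ i, (a i ω + ε i ω)‖ ^ 2 ≤ (m : ℝ) * ∑ i, ‖a i ω + ε i ω‖ ^ 2 :=
      le_trans (by nlinarith [norm_nonneg (∑ i, (a i ω + ε i ω))]) h2
    rw [norm_smul, Real.norm_eq_abs, abs_of_pos (inv_pos.2 hm'), mul_pow]
    calc ((m:ℝ)⁻¹) ^ 2 * ‖∑ i, (a i ω + ε i ω)‖ ^ 2
        ≤ ((m:ℝ)⁻¹) ^ 2 * ((m : ℝ) * ∑ i, ‖a i ω + ε i ω‖ ^ 2) :=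
          mul_le_mul_of_nonneg_left h3 (by positivity)
      _ = (m : ℝ)⁻¹ * ∑ i, ‖a i ω + ε i ω‖ ^ 2 := by
          rw [show ((m:ℝ)⁻¹) ^ 2 * ((m : ℝ) * ∑ i, ‖a i ω + ε i ω‖ ^ 2)
              = ((m:ℝ)⁻¹ * (m:ℝ)) * ((m:ℝ)⁻¹ * ∑ i, ‖a i ω + ε i ω‖ ^ 2) by ring,
            inv_mul_cancel₀ hm'.ne', one_mul]
  -- assemble
  calc ∫ ω, ‖(m : ℝ)⁻¹ • ∑ i, (min 1 (C i / ‖Δ i ω‖) • Δ i ω + ε i ω)‖ ^ 2 ∂μ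
      = ∫ ω, ‖(m : ℝ)⁻¹ • ∑ i, (a i ω + ε i ω)‖ ^ 2 ∂μ := rfl
    _ ≤ ∫ ω, (m : ℝ)⁻¹ * ∑ i, ‖a i ω + ε i ω‖ ^ 2 ∂μ := by
        refine integral_mono_of_nonneg (ae_of_all _ fun ω => by positivity) ?_
          (ae_of_all _ hmain)
        have h := (integrable_finset_sum (μ := μ) Finset.univ
          fun i _ => hxsq_int i).const_mul ((m : ℝ)⁻¹)
        exact h
    _ = (m : ℝ)⁻¹ * ∑ i, ∫ ω, ‖a i ω + ε i ω‖ ^ 2 ∂μ := by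
        rw [integral_const_mul]
        congr 1
        exact integral_finset_sum _ fun i _ => hxsq_int i
    _ ≤ (m : ℝ)⁻¹ * ∑ i, ((C i ^ 2 + σ0sq i) + α i ^ 2 * (1 + σ1sq i) * ∫ ω, ‖g i ω‖ ^ 2 ∂μ) :=
        mul_le_mul_of_nonneg_left (Finset.sum_le_sum fun i _ => hper i) (by positivity)
    _ = (m : ℝ)⁻¹ * ∑ i, (C i ^ 2 + σ0sq i) +
        (m : ℝ)⁻¹ * ∑ i, α i ^ 2 * (1 + σ1sq i) * ∫ ω, ‖g i ω‖ ^ 2 ∂μ := by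
        rw [Finset.sum_add_distrib, mul_add]
end
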